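/- The vector μ = [(a+1)/(2(a+3)), 1/(a+3), (a+1)/(2(a+3)), 1/(a+3)] is a probability vector for every a ∈ [0,1], and the weighted sum (a+1)/(a+3)·H(2a/(a+1)) + (2/(a+3))·(H((a+1)/2) + a − 1) equals 2H(a)/(3+a), where H is binary entropy in bits. -/
import Mathlib


/-- Binary entropy in bits. -/
noncomputable def binEnt (p : ℝ) : ℝ :=
  -(p * Real.logb 2 p) - ((1 - p) * Real.logb 2 (1 - p))

lemma binEnt_zero : binEnt 0 = 0 := by simp [binEnt]

lemma binEnt_one : binEnt 1 = 0 := by simp [binEnt]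

lemma binEnt_half : binEnt (1/2) = 1 := by
  have : Real.logb 2 (1/2 : ℝ) = -1 := by
    rw [one_div, Real.logb_inv, Real.logb_self_eq_one (by norm_num)]
  have e : (1:ℝ) - 1/2 = 1/2 := by norm_num
  rw [binEnt, e, this]; ring

/-- For every `a ∈ [0,1]`, the vector
`[(a+1)/(2(a+3)), 1/(a+3), (a+1)/(2(a+3)), 1/(a+3)]` is a probability vector,
and the weighted Q-graph reward
`(a+1)/(a+3)·H(2a/(a+1)) + (2/(a+3))·(H((a+1)/2) + a − 1)` equals
`2H(a)/(3+a)`. -/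
theorem ising_qgraph_reward (a : ℝ) (ha : a ∈ Set.Icc (0 : ℝ) 1) :
    (0 ≤ (a + 1) / (2 * (a + 3)) ∧ 0 ≤ 1 / (a + 3) ∧
      (a + 1) / (2 * (a + 3)) + 1 / (a + 3) + (a + 1) / (2 * (a + 3)) + 1 / (a + 3) = 1) ∧
    (a + 1) / (a + 3) * binEnt (2 * a / (a + 1))
        + (2 / (a + 3)) * (binEnt ((a + 1) / 2) + a - 1)
      = 2 * binEnt a / (3 + a) := by
  obtain ⟨ha0, ha1⟩ := ha
  have h3 : (0:ℝ) < a + 3 := by linarith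
  refine ⟨⟨by positivity, by positivity, by field_simp; ring⟩, ?_⟩
  rcases eq_or_lt_of_le ha0 with h0 | h0
  · subst a
    norm_num [binEnt_zero, binEnt_half]
  rcases eq_or_lt_of_le ha1 with h1 | h1
  · subst h1
    norm_num [binEnt_one]
  -- interior case 0 < a < 1
  have ha' : a ≠ 0 := ne_of_gt h0
  have h1a : (0:ℝ) < 1 - a := by linarith
  have h1a' : (1:ℝ) - a ≠ 0 := ne_of_gt h1a
  have hp1 : (0:ℝ) < a + 1 := by linarith
  have hp1' : a + 1 ≠ 0 := ne_of_gt hp1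
  have l2 : Real.logb 2 2 = 1 := Real.logb_self_eq_one (by norm_num)
  have e1 : (1:ℝ) - 2 * a / (a + 1) = (1 - a) / (a + 1) := by field_simp; ring
  have e2 : (1:ℝ) - (a + 1) / 2 = (1 - a) / 2 := by ring
  have r1 : Real.logb 2 (2 * a / (a + 1)) = 1 + Real.logb 2 a - Real.logb 2 (a + 1) := by
    rw [Real.logb_div (by positivity) hp1', Real.logb_mul (by norm_num) ha', l2]
  have r2 : Real.logb 2 ((1 - a) / (a + 1)) = Real.logb 2 (1 - a) - Real.logb 2 (a + 1) :=
    Real.logb_div h1a' hp1'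
  have r3 : Real.logb 2 ((a + 1) / 2) = Real.logb 2 (a + 1) - 1 := by
    rw [Real.logb_div hp1' (by norm_num), l2]
  have r4 : Real.logb 2 ((1 - a) / 2) = Real.logb 2 (1 - a) - 1 := by
    rw [Real.logb_div h1a' (by norm_num), l2]
  simp only [binEnt, e1, e2, r1, r2, r3, r4]
  field_simp
  ring
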